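/- arXiv:math/0501559 — 3 statements merged into one kernel-verified Lean document; each statement's English description precedes it below -/
import Mathlib

section
/- Let W be a real normed vector space, let X : E → W be twice continuously differentiable (C²) on a neighborhood of p ∈ E, and let a, b : E → E be vector fields differentiable at p. Then the commutator of the directional derivative operators along a and b applied to X equals the directional derivative of X along the Lie product [a,b]: fderiv ℝ (fun x => fderiv ℝ X x (b x)) p (a p) − fderiv ℝ (fun x => fderiv ℝ X x (a x)) p (b p) = fderiv ℝ X p ([a,b] p). -/
/-- `[a·∂₀, b·∂₀]X = [a,b]·∂₀X`: the commutator of directional derivative operators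
along vector fields `a` and `b` applied to a `C²` multivector field `X` equals the
directional derivative of `X` along the canonical Lie product `[a,b]`. -/
theorem stmt_5 {n : ℕ} {W : Type*} [NormedAddCommGroup W] [NormedSpace ℝ W]
    (X : EuclideanSpace ℝ (Fin n) → W)
    (a b : EuclideanSpace ℝ (Fin n) → EuclideanSpace ℝ (Fin n))
    (p : EuclideanSpace ℝ (Fin n))
    (hX : ContDiffAt ℝ 2 X p)
    (ha : DifferentiableAt ℝ a p) (hb : DifferentiableAt ℝ b p) :
    fderiv ℝ (fun x => fderiv ℝ X x (b x)) p (a p) -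
      fderiv ℝ (fun x => fderiv ℝ X x (a x)) p (b p) =
    fderiv ℝ X p (fderiv ℝ b p (a p) - fderiv ℝ a p (b p)) := by
  have hX' : DifferentiableAt ℝ (fderiv ℝ X) p := by
    have := hX.fderiv_right (m := 1) (by norm_num)
    exact this.differentiableAt (by norm_num)
  have hXd : DifferentiableAt ℝ X p := hX.differentiableAt (by norm_num)
  have h1 : fderiv ℝ (fun x => fderiv ℝ X x (b x)) p (a p) =
      (fderiv ℝ (fderiv ℝ X) p (a p)) (b p) + fderiv ℝ X p (fderiv ℝ b p (a p)) := by
    rw [fderiv_clm_apply hX' hb]; simp; abel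
  have h2 : fderiv ℝ (fun x => fderiv ℝ X x (a x)) p (b p) =
      (fderiv ℝ (fderiv ℝ X) p (b p)) (a p) + fderiv ℝ X p (fderiv ℝ a p (b p)) := by
    rw [fderiv_clm_apply hX' ha]; simp; abel
  have hsym := (hX.isSymmSndFDerivAt (by norm_num)).eq (a p) (b p)
  rw [h1, h2, hsym, map_sub]
  abel
end

section
/- Let W, Z be real normed vector spaces and B : E →L[ℝ] W →L[ℝ] Z a continuous bilinear map. Let e, f : Fin n → E be bases of E and let e', f' : Fin n → E be their reciprocal families, i.e. ⟪e μ, e' ν⟫ = δ_μ^ν and ⟪f μ, f' ν⟫ = δ_μ^ν for all μ, ν. Then for every continuous linear map L : E →L[ℝ] W, ∑_{μ} B (e' μ) (L (e μ)) = ∑_{μ} B (f' μ) (L (f μ)). (Taking L = fderiv ℝ X p, this says the Hestenes derivative ∂₀∗X := e^μ ∗ (e_μ·∂₀X) of a smooth multivector field X does not depend on the choice of the pair of reciprocal frame fields.) -/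
/-!
Both sums contract the bilinear map `(x, y) ↦ B x (L y)` with the identity tensor `∑ μ, e' μ ⊗ e μ`,
which does not depend on the frame. Concretely, expand `e μ = ∑ ν, ⟪e μ, f' ν⟫ • f ν` in the frame
`f`, exchange the sums, and collapse `∑ μ, ⟪f' ν, e μ⟫ • e' μ = f' ν` using that `e` spans `E`.
-/

open RealInnerProductSpace

namespace Module.Basis

variable {E ι : Type*} [NormedAddCommGroup E] [InnerProductSpace ℝ E] [Fintype ι] [DecidableEq ι]
  (e : Basis ι ℝ E) {e' : ι → E}

theorem repr_eq_inner_reciprocal (he : ∀ μ ν, ⟪e μ, e' ν⟫ = if μ = ν then (1 : ℝ) else 0)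
    (x : E) (ν : ι) : e.repr x ν = ⟪x, e' ν⟫ := by
  conv_rhs => rw [← e.sum_repr x]
  simp only [sum_inner, real_inner_smul_left, he, mul_ite, mul_one, mul_zero,
    Finset.sum_ite_eq', Finset.mem_univ, if_true]

theorem sum_inner_reciprocal_smul (he : ∀ μ ν, ⟪e μ, e' ν⟫ = if μ = ν then (1 : ℝ) else 0)
    (x : E) : ∑ μ, ⟪x, e' μ⟫ • e μ = x := by
  simpa only [e.repr_eq_inner_reciprocal he] using e.sum_repr x

theorem sum_inner_smul_reciprocal (he : ∀ μ ν, ⟪e μ, e' ν⟫ = if μ = ν then (1 : ℝ) else 0)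
    (x : E) : ∑ μ, ⟪x, e μ⟫ • e' μ = x := by
  refine InnerProductSpace.ext_inner_right_basis e fun ν => ?_
  simp only [sum_inner, real_inner_smul_left, real_inner_comm (e _) (e' _), he, mul_ite,
    mul_one, mul_zero, Finset.sum_ite_eq, Finset.mem_univ, if_true]

theorem sum_bilin_reciprocal_eq {M ι' : Type*} [AddCommGroup M] [Module ℝ M]
    [Fintype ι'] [DecidableEq ι'] (Φ : E →ₗ[ℝ] E →ₗ[ℝ] M)
    (he : ∀ μ ν, ⟪e μ, e' ν⟫ = if μ = ν then (1 : ℝ) else 0)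
    (f : Basis ι' ℝ E) {f' : ι' → E}
    (hf : ∀ μ ν, ⟪f μ, f' ν⟫ = if μ = ν then (1 : ℝ) else 0) :
    ∑ μ, Φ (e' μ) (e μ) = ∑ ν, Φ (f' ν) (f ν) :=
  calc ∑ μ, Φ (e' μ) (e μ)
      = ∑ μ, Φ (e' μ) (∑ ν, ⟪e μ, f' ν⟫ • f ν) := by
        simp only [f.sum_inner_reciprocal_smul hf]
    _ = ∑ ν, Φ (∑ μ, ⟪f' ν, e μ⟫ • e' μ) (f ν) := by
        simp only [map_sum, map_smul, LinearMap.sum_apply, LinearMap.smul_apply,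
          real_inner_comm (f' _)]
        exact Finset.sum_comm
    _ = ∑ ν, Φ (f' ν) (f ν) := by
        simp only [e.sum_inner_smul_reciprocal he]

end Module.Basis

/-- The Hestenes derivative `∂₀∗X = ∑ μ, e^μ ∗ (e_μ·∂₀X)` does not depend on the
choice of the pair of reciprocal frame fields: for any continuous bilinear `B`, any
two bases `e`, `f` of `E` with respective reciprocal families `e'`, `f'`, and any
continuous linear `L` (e.g. `L = fderiv ℝ X p`), the sums agree. -/
theorem stmt_7 {n : ℕ} {W Z : Type*}
    [NormedAddCommGroup W] [NormedSpace ℝ W]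
    [NormedAddCommGroup Z] [NormedSpace ℝ Z]
    (B : EuclideanSpace ℝ (Fin n) →L[ℝ] W →L[ℝ] Z)
    (e f : Module.Basis (Fin n) ℝ (EuclideanSpace ℝ (Fin n)))
    (e' f' : Fin n → EuclideanSpace ℝ (Fin n))
    (he : ∀ μ ν, ⟪e μ, e' ν⟫ = if μ = ν then (1 : ℝ) else 0)
    (hf : ∀ μ ν, ⟪f μ, f' ν⟫ = if μ = ν then (1 : ℝ) else 0)
    (L : EuclideanSpace ℝ (Fin n) →L[ℝ] W) :
    ∑ μ : Fin n, B (e' μ) (L (e μ)) = ∑ μ : Fin n, B (f' μ) (L (f μ)) :=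
  e.sum_bilin_reciprocal_eq
    ((ContinuousLinearMap.toLinearMap₁₂ B).compl₂ (L : EuclideanSpace ℝ (Fin n) →ₗ[ℝ] W)) he f hf
end

section
/- Let U ⊆ E be open, let V : Fin k → Type be a family of finite-dimensional real normed vector spaces, let W be a finite-dimensional real normed vector space, and let t : E → ContinuousMultilinearMap ℝ V W. Then t is C^∞ on U if and only if for every family X : (i : Fin k) → (E → V i) of maps each of which is C^∞ on U, the map p ↦ t p (fun i => X i p) is C^∞ on U. -/
/-- Proposition 2: a `k`-extensor field `t` is smooth on an open set `U` if and only
if, for all smooth multivector fields `X₁, …, X_k` on `U`, the multivector field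
`p ↦ t_p (X₁(p), …, X_k(p))` is smooth on `U`. -/
theorem stmt_8 {n k : ℕ} {V : Fin k → Type*}
    [∀ i, NormedAddCommGroup (V i)] [∀ i, NormedSpace ℝ (V i)]
    [∀ i, FiniteDimensional ℝ (V i)]
    {W : Type*} [NormedAddCommGroup W] [NormedSpace ℝ W] [FiniteDimensional ℝ W]
    (U : Set (EuclideanSpace ℝ (Fin n))) (hU : IsOpen U)
    (t : EuclideanSpace ℝ (Fin n) → ContinuousMultilinearMap ℝ V W) :
    ContDiffOn ℝ (⊤ : ℕ∞) t U ↔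
      ∀ X : (i : Fin k) → (EuclideanSpace ℝ (Fin n) → V i),
        (∀ i, ContDiffOn ℝ (⊤ : ℕ∞) (X i) U) →
        ContDiffOn ℝ (⊤ : ℕ∞) (fun p => t p (fun i => X i p)) U := by
  classical
  set e : ∀ i, Module.Basis (Fin (Module.finrank ℝ (V i))) ℝ (V i) :=
    fun i => Module.finBasis ℝ (V i) with he
  constructor
  · intro ht X hX
    have key : ∀ p, t p (fun i => X i p) =
        ∑ r : ∀ i, Fin (Module.finrank ℝ (V i)),
          (∏ i, (e i).repr (X i p) (r i)) • t p (fun i => e i (r i)) := by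
      intro p
      have h1 : (fun i => X i p) = fun i => ∑ j, (e i).repr (X i p) j • e i j := by
        funext i; rw [Module.Basis.sum_repr]
      rw [h1]
      have h2 := (t p).toMultilinearMap.map_sum (g := fun i j => (e i).repr (X i p) j • e i j)
      simp only [ContinuousMultilinearMap.coe_coe] at h2
      rw [h2]
      refine Finset.sum_congr rfl fun r _ => ?_
      have h3 := (t p).toMultilinearMap.map_smul_univ (fun i => (e i).repr (X i p) (r i))
        (fun i => e i (r i))
      simpa using h3
    have : ContDiffOn ℝ (⊤ : ℕ∞) (fun p =>
        ∑ r : ∀ i, Fin (Module.finrank ℝ (V i)),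
          (∏ i, (e i).repr (X i p) (r i)) • t p (fun i => e i (r i))) U := by
      apply ContDiffOn.sum
      intro r _
      apply ContDiffOn.smul
      · apply contDiffOn_prod
        intro i _
        have hc : ContDiff ℝ (⊤ : ℕ∞) (LinearMap.toContinuousLinearMap ((e i).coord (r i))) :=
          (LinearMap.toContinuousLinearMap ((e i).coord (r i))).contDiff
        exact hc.comp_contDiffOn (hX i)
      · exact (ContinuousMultilinearMap.apply ℝ V W
          (fun i => e i (r i))).contDiff.comp_contDiffOn ht
    exact this.congr fun p _ => key p
  · intro h
    -- evaluate at all basis tuples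
    set Φ : ContinuousMultilinearMap ℝ V W →ₗ[ℝ]
        ((∀ i, Fin (Module.finrank ℝ (V i))) → W) :=
      { toFun := fun f d => f (fun i => e i (d i))
        map_add' := by intro f g; funext d; simp
        map_smul' := by intro c f; funext d; simp } with hΦ
    have hinj : Function.Injective Φ := by
      intro f g hfg
      apply ContinuousMultilinearMap.toMultilinearMap_injective
      apply Module.Basis.ext_multilinear e
      intro v
      exact congrFun hfg v
    obtain ⟨g, hg⟩ := Φ.exists_leftInverse_of_injective (LinearMap.ker_eq_bot.2 hinj)
    have hgc : ContDiff ℝ (⊤ : ℕ∞) (LinearMap.toContinuousLinearMap g) :=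
      (LinearMap.toContinuousLinearMap g).contDiff
    have hΦt : ContDiffOn ℝ (⊤ : ℕ∞) (fun p => Φ (t p)) U := by
      rw [contDiffOn_pi]
      intro d
      exact h (fun i _ => e i (d i)) (fun i => contDiffOn_const)
    have : ContDiffOn ℝ (⊤ : ℕ∞) (fun p => (LinearMap.toContinuousLinearMap g) (Φ (t p))) U :=
      hgc.comp_contDiffOn hΦt
    refine this.congr fun p _ => ?_
    show t p = (LinearMap.toContinuousLinearMap g) (Φ (t p))
    have := LinearMap.congr_fun hg (t p)
    simpa using this.symm
end
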